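/- Let g : ℝ≥0 → ℝ>0 be differentiable with g'(t) + C g(t)^α ≤ 0 for all t ≥ 0, where C > 0 and 1 < α < 2. Then there exists a constant C' > 0 such that 0 < g(t) ≤ C' (1 + t)^{-1/(α-1)} for all t ≥ 0. -/

import Mathlib

/-!
For `1 < α` the quantity `g ^ (1 - α)` grows at least linearly: by the chain rule and the
differential inequality its derivative is `(1 - α) g' g ^ (-α) ≥ C (α - 1)`. Hence
`g t ^ (1 - α) ≥ g 0 ^ (1 - α) + C (α - 1) t ≥ c (1 + t)` with `c = min (g 0 ^ (1 - α)) (C (α - 1))`,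
and raising to the negative power `1 / (1 - α)` gives `g t ≤ c ^ (-1 / (α - 1)) (1 + t) ^ (-1 / (α - 1))`.
-/

open Set

lemma le_deriv_rpow_one_sub_of_deriv_add_le {g : ℝ → ℝ} {C α t : ℝ} (hα : 1 ≤ α)
    (hg : DifferentiableAt ℝ g t) (hgt : 0 < g t) (hdec : deriv g t + C * g t ^ α ≤ 0) :
    C * (α - 1) ≤ deriv (fun s => g s ^ (1 - α)) t := by
  rw [(hg.hasDerivAt.rpow_const (Or.inl hgt.ne')).deriv, sub_sub_cancel_left]
  have hcancel : g t ^ α * g t ^ (-α) = 1 := by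
    rw [← Real.rpow_add hgt, add_neg_cancel, Real.rpow_zero]
  have hpow : 0 < g t ^ (-α) := Real.rpow_pos_of_pos hgt _
  have hslope : C * g t ^ α * (α - 1) ≤ deriv g t * (1 - α) := by nlinarith
  calc C * (α - 1) = C * g t ^ α * (α - 1) * g t ^ (-α) := by
        rw [mul_right_comm C, mul_assoc, hcancel, mul_one]
    _ ≤ deriv g t * (1 - α) * g t ^ (-α) := mul_le_mul_of_nonneg_right hslope hpow.le

lemma rpow_one_sub_add_mul_le {g : ℝ → ℝ} {C α : ℝ} (hα : 1 ≤ α)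
    (hg : ∀ t ≥ 0, DifferentiableAt ℝ g t) (hgpos : ∀ t ≥ 0, 0 < g t)
    (hdec : ∀ t ≥ 0, deriv g t + C * g t ^ α ≤ 0) {t : ℝ} (ht : 0 ≤ t) :
    g 0 ^ (1 - α) + C * (α - 1) * t ≤ g t ^ (1 - α) := by
  have hdiff : ∀ s ≥ 0, DifferentiableAt ℝ (fun s => g s ^ (1 - α)) s := fun s hs =>
    (hg s hs).rpow_const (Or.inl (hgpos s hs).ne')
  have hgrowth := (convex_Ici (0 : ℝ)).mul_sub_le_image_sub_of_le_deriv
    (fun s hs => (hdiff s hs).continuousAt.continuousWithinAt)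
    (fun s hs => (hdiff s (interior_subset hs)).differentiableWithinAt)
    (fun s hs => le_deriv_rpow_one_sub_of_deriv_add_le hα (hg s (interior_subset hs))
      (hgpos s (interior_subset hs)) (hdec s (interior_subset hs)))
    0 self_mem_Ici t ht ht
  linarith

theorem stmt_2_general (g : ℝ → ℝ) (C α : ℝ) (hC : 0 < C) (hα : 1 < α)
    (hg : Differentiable ℝ g) (hgpos : ∀ t ≥ 0, 0 < g t)
    (hdec : ∀ t ≥ 0, deriv g t + C * g t ^ α ≤ 0) :
    ∃ C' > 0, ∀ t ≥ 0, g t ≤ C' * (1 + t) ^ (-(1 / (α - 1))) := by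
  set c := min (g 0 ^ (1 - α)) (C * (α - 1))
  have hc : 0 < c := lt_min (Real.rpow_pos_of_pos (hgpos 0 le_rfl) _) (by nlinarith)
  refine ⟨c ^ (-(1 / (α - 1))), Real.rpow_pos_of_pos hc _, fun t ht => ?_⟩
  have hlinear : c * (1 + t) ≤ g t ^ (1 - α) :=
    calc c * (1 + t) = c + c * t := by ring
      _ ≤ g 0 ^ (1 - α) + C * (α - 1) * t :=
        add_le_add (min_le_left _ _) (mul_le_mul_of_nonneg_right (min_le_right _ _) ht)
      _ ≤ g t ^ (1 - α) := rpow_one_sub_add_mul_le hα.le (fun s _ => hg s) hgpos hdec ht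
  have hexp : -(1 / (α - 1)) = (1 - α)⁻¹ := by rw [one_div, ← inv_neg, neg_sub]
  rw [← Real.mul_rpow hc.le (by linarith), hexp]
  exact (Real.le_rpow_inv_iff_of_neg (hgpos t ht) (by positivity) (by linarith)).2 hlinear

theorem stmt_2 (g : ℝ → ℝ) (C α : ℝ) (hC : 0 < C) (hα : 1 < α) (hα2 : α < 2)
    (hg : Differentiable ℝ g) (hgpos : ∀ t ≥ 0, 0 < g t)
    (hdec : ∀ t ≥ 0, deriv g t + C * g t ^ α ≤ 0) :
    ∃ C' > 0, ∀ t ≥ 0, g t ≤ C' * (1 + t) ^ (-(1 / (α - 1))) :=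
  stmt_2_general g C α hC hα hg hgpos hdec
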